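/- Let D = (E, s, t) be a demi-matroid with integer-valued s, t, and f harmonic of degree d. With Z_{D,f}(λ,x,y) = (−1)^d ∑_{T ⊆ E, d ≤ |T| ≤ n−d} f̃(T) λ^{s(E)−s(T)} (x−y)^{|T|−d} y^{|E−T|−d}, the dual D* = (E, t, s) satisfies λ^{s(E)−d} · Z_{D*, f}(λ, x, y) = (−1)^d · Z_{D, f}(λ, x + (λ−1)y, x − y). -/
import Mathlib


open Finset

variable {ι : Type*} [Fintype ι] [DecidableEq ι]

/-- `f` is harmonic of degree `d`. -/
def IsHarmonic (d : ℕ) (f : Finset ι → ℝ) : Prop :=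
  ∀ Y : Finset ι, Y.card + 1 = d →
    ∑ Z ∈ Finset.univ.filter (fun Z : Finset ι => Z.card = d ∧ Y ⊆ Z), f Z = 0

/-- The extension `f̃(X) = ∑_{Z ⊆ X, |Z| = d} f(Z)`. -/
def tilde (d : ℕ) (f : Finset ι → ℝ) (X : Finset ι) : ℝ :=
  ∑ Z ∈ X.powerset.filter (fun Z : Finset ι => Z.card = d), f Z

/-- A demi-matroid on ground set `E = univ` with integer-valued functions. -/
def IsDemimatroidN (s t : Finset ι → ℕ) : Prop :=
  (∀ ⦃X Y : Finset ι⦄, X ⊆ Y →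
      (s X ≤ s Y ∧ s Y ≤ Y.card) ∧ (t X ≤ t Y ∧ t Y ≤ Y.card)) ∧
  (∀ X : Finset ι, ((Xᶜ.card : ℤ) - s Xᶜ = (t Finset.univ : ℤ) - t X))

/-- `Z_{D,f}(λ,x,y) = (-1)^d ∑_{T, d ≤ |T| ≤ n-d} f̃(T) λ^{s(E)-s(T)} (x-y)^{|T|-d} y^{|E-T|-d}`
(real powers of `λ`). -/
noncomputable def Zdemi (s : Finset ι → ℕ) (d : ℕ) (f : Finset ι → ℝ) (lam x y : ℝ) : ℝ :=
  (-1 : ℝ) ^ d *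
    ∑ T ∈ Finset.univ.filter
        (fun T : Finset ι => d ≤ T.card ∧ T.card ≤ Fintype.card ι - d),
      tilde d f T * lam ^ ((s Finset.univ : ℝ) - (s T : ℝ)) *
        (x - y) ^ (T.card - d) * y ^ (Tᶜ.card - d)

/-- auxiliary: sum of `f` over `d`-sets containing `W`. -/
def Fsum (d : ℕ) (f : Finset ι → ℝ) (W : Finset ι) : ℝ :=
  ∑ Z ∈ Finset.univ.filter (fun Z : Finset ι => Z.card = d ∧ W ⊆ Z), f Z

lemma Fsum_step (d : ℕ) (f : Finset ι → ℝ) (W : Finset ι) :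
    ∑ y ∈ Wᶜ, Fsum d f (insert y W)
      = ((d - W.card : ℕ) : ℝ) * Fsum d f W := by
  unfold Fsum
  have h1 : ∀ y : ι, Finset.univ.filter (fun Z : Finset ι => Z.card = d ∧ insert y W ⊆ Z)
      = (Finset.univ.filter (fun Z : Finset ι => Z.card = d ∧ W ⊆ Z)).filter
          (fun Z => y ∈ Z) := by
    intro y
    rw [filter_filter]
    apply filter_congr
    intro Z _
    simp [insert_subset_iff]
    tauto
  calc ∑ y ∈ Wᶜ, ∑ Z ∈ Finset.univ.filter
          (fun Z : Finset ι => Z.card = d ∧ insert y W ⊆ Z), f Z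
      = ∑ y ∈ Wᶜ, ∑ Z ∈ Finset.univ.filter
          (fun Z : Finset ι => Z.card = d ∧ W ⊆ Z), if y ∈ Z then f Z else 0 := by
        refine sum_congr rfl fun y _ => ?_
        rw [h1 y, sum_filter]
    _ = ∑ Z ∈ Finset.univ.filter (fun Z : Finset ι => Z.card = d ∧ W ⊆ Z),
          ∑ y ∈ Wᶜ, if y ∈ Z then f Z else 0 := sum_comm
    _ = ∑ Z ∈ Finset.univ.filter (fun Z : Finset ι => Z.card = d ∧ W ⊆ Z),
          ((d - W.card : ℕ) : ℝ) * f Z := by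
        refine sum_congr rfl fun Z hZ => ?_
        simp only [mem_filter, mem_univ, true_and] at hZ
        rw [← sum_filter]
        have h2 : Wᶜ.filter (fun y => y ∈ Z) = Z \ W := by
          ext y; simp [mem_sdiff, and_comm]
        rw [h2, sum_const, card_sdiff_of_subset hZ.2, hZ.1, nsmul_eq_mul]
    _ = ((d - W.card : ℕ) : ℝ) * ∑ Z ∈ Finset.univ.filter
          (fun Z : Finset ι => Z.card = d ∧ W ⊆ Z), f Z := by rw [mul_sum]

lemma Fsum_eq_zero {d : ℕ} {f : Finset ι → ℝ} (hf : IsHarmonic d f) :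
    ∀ (m : ℕ) (W : Finset ι), W.card + m + 1 = d → Fsum d f W = 0 := by
  intro m
  induction m with
  | zero => intro W hW; exact hf W (by omega)
  | succ m ih =>
    intro W hW
    have hc : ∀ y ∈ Wᶜ, Fsum d f (insert y W) = 0 := by
      intro y hy
      refine ih (insert y W) ?_
      rw [card_insert_of_notMem (by simpa using hy)]
      omega
    have h := Fsum_step d f W
    rw [sum_eq_zero hc] at h
    have hne : ((d - W.card : ℕ) : ℝ) ≠ 0 := by
      have : d - W.card = m + 2 := by omega
      rw [this]; positivity
    exact (mul_eq_zero.mp h.symm).resolve_left hne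

lemma tilde_compl {d : ℕ} {f : Finset ι → ℝ} (hf : IsHarmonic d f) (T : Finset ι) :
    tilde d f Tᶜ = (-1 : ℝ) ^ d * tilde d f T := by
  have hstep1 : Tᶜ.powerset.filter (fun Z : Finset ι => Z.card = d)
      = (Finset.univ.filter (fun Z : Finset ι => Z.card = d)).filter
          (fun Z => Z ∩ T = ∅) := by
    ext Z
    simp only [mem_filter, mem_powerset, mem_univ, true_and]
    rw [← disjoint_iff_inter_eq_empty, Finset.subset_compl_comm]
    constructor
    · rintro ⟨h1, h2⟩; exact ⟨h2, disjoint_left.mpr fun a ha haT => by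
        have := h1 haT; simp at this; exact this ha⟩
    · rintro ⟨h2, h1⟩; exact ⟨fun a haT => by
        simp only [mem_compl]; exact fun haZ => disjoint_left.mp h1 haZ haT, h2⟩
  have key : (tilde d f Tᶜ)
      = ∑ Z ∈ Finset.univ.filter (fun Z : Finset ι => Z.card = d),
          f Z * ∑ W ∈ (Z ∩ T).powerset, (-1 : ℝ) ^ W.card := by
    rw [tilde, hstep1, sum_filter]
    refine sum_congr rfl fun Z _ => ?_
    have : ∑ W ∈ (Z ∩ T).powerset, (-1 : ℝ) ^ W.card
        = if Z ∩ T = ∅ then 1 else 0 := by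
      calc ∑ W ∈ (Z ∩ T).powerset, (-1 : ℝ) ^ W.card
          = ((∑ W ∈ (Z ∩ T).powerset, (-1 : ℤ) ^ W.card : ℤ) : ℝ) := by push_cast; rfl
        _ = _ := by rw [Finset.sum_powerset_neg_one_pow_card]; split <;> simp
    rw [this]
    split <;> simp
  rw [key]
  have hswap : ∑ Z ∈ Finset.univ.filter (fun Z : Finset ι => Z.card = d),
        f Z * ∑ W ∈ (Z ∩ T).powerset, (-1 : ℝ) ^ W.card
      = ∑ W ∈ T.powerset, (-1 : ℝ) ^ W.card * Fsum d f W := by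
    have h3 : ∀ Z : Finset ι, (Z ∩ T).powerset = T.powerset.filter (fun W => W ⊆ Z) := by
      intro Z; ext W
      simp only [mem_powerset, mem_filter, subset_inter_iff]
      tauto
    calc ∑ Z ∈ Finset.univ.filter (fun Z : Finset ι => Z.card = d),
          f Z * ∑ W ∈ (Z ∩ T).powerset, (-1 : ℝ) ^ W.card
        = ∑ Z ∈ Finset.univ.filter (fun Z : Finset ι => Z.card = d),
            ∑ W ∈ T.powerset, if W ⊆ Z then (-1 : ℝ) ^ W.card * f Z else 0 := by
          refine sum_congr rfl fun Z _ => ?_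
          rw [h3 Z, sum_filter, mul_sum]
          refine sum_congr rfl fun W _ => ?_
          split <;> ring
      _ = ∑ W ∈ T.powerset, ∑ Z ∈ Finset.univ.filter (fun Z : Finset ι => Z.card = d),
            if W ⊆ Z then (-1 : ℝ) ^ W.card * f Z else 0 := sum_comm
      _ = ∑ W ∈ T.powerset, (-1 : ℝ) ^ W.card * Fsum d f W := by
          refine sum_congr rfl fun W _ => ?_
          rw [← sum_filter, filter_filter, Fsum, mul_sum]
  rw [hswap]
  have hterm : ∀ W ∈ T.powerset, (-1 : ℝ) ^ W.card * Fsum d f W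
      = if W.card = d then (-1 : ℝ) ^ d * f W else 0 := by
    intro W _
    rcases lt_trichotomy W.card d with h | h | h
    · rw [Fsum_eq_zero hf (d - W.card - 1) W (by omega), mul_zero, if_neg (by omega)]
    · rw [if_pos h, h]
      congr 1
      have : Finset.univ.filter (fun Z : Finset ι => Z.card = d ∧ W ⊆ Z) = {W} := by
        ext Z
        simp only [mem_filter, mem_univ, true_and, mem_singleton]
        constructor
        · rintro ⟨h1, h2⟩
          exact (Finset.eq_of_subset_of_card_le h2 (by omega)).symm
        · rintro rfl; exact ⟨h, subset_rfl⟩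
      rw [Fsum, this, sum_singleton]
    · have : Fsum d f W = 0 := by
        rw [Fsum]
        apply sum_eq_zero
        intro Z hZ
        simp only [mem_filter, mem_univ, true_and] at hZ
        exact absurd (card_le_card hZ.2) (by omega)
      rw [this, mul_zero, if_neg (by omega)]
  rw [sum_congr rfl hterm, ← sum_filter, tilde, mul_sum]

/-- `λ^{s(E)-d} Z_{D*,f}(λ,x,y) = (-1)^d Z_{D,f}(λ, x + (λ-1)y, x - y)` for every
real `λ > 0`, where `D* = (E, t, s)`. -/
theorem stmt_19 (s t : Finset ι → ℕ) (hD : IsDemimatroidN s t)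
    (d : ℕ) (f : Finset ι → ℝ) (hf : IsHarmonic d f) (lam x y : ℝ) (hlam : 0 < lam) :
    lam ^ ((s Finset.univ : ℝ) - (d : ℝ)) * Zdemi t d f lam x y
      = (-1 : ℝ) ^ d * Zdemi s d f lam (x + (lam - 1) * y) (x - y) := by
  classical
  rw [Zdemi, Zdemi, mul_sum, mul_sum, mul_sum, mul_sum]
  refine Finset.sum_nbij' (fun T => Tᶜ) (fun T => Tᶜ) ?_ ?_ ?_ ?_ ?_
  · intro T hT
    simp only [mem_filter, mem_univ, true_and, card_compl] at hT ⊢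
    have := card_le_univ T
    omega
  · intro T hT
    simp only [mem_filter, mem_univ, true_and, card_compl] at hT ⊢
    have := card_le_univ T
    omega
  · intro T _; exact compl_compl T
  · intro T _; exact compl_compl T
  · intro T hT
    simp only [mem_filter, mem_univ, true_and] at hT
    beta_reduce
    have hdn : d ≤ Tᶜ.card := by
      rw [card_compl]
      have := card_le_univ T
      omega
    rw [compl_compl, tilde_compl hf T]
    have hbase : x + (lam - 1) * y - (x - y) = lam * y := by ring
    rw [hbase, mul_pow, ← Real.rpow_natCast lam (Tᶜ.card - d)]
    have hexp : lam ^ ((s Finset.univ : ℝ) - (d : ℝ))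
          * lam ^ ((t Finset.univ : ℝ) - (t T : ℝ))
        = lam ^ ((s Finset.univ : ℝ) - (s Tᶜ : ℝ))
          * lam ^ ((Tᶜ.card - d : ℕ) : ℝ) := by
      rw [← Real.rpow_add hlam, ← Real.rpow_add hlam]
      congr 1
      have hD2 : ((Tᶜ.card : ℝ)) - (s Tᶜ : ℝ) = (t Finset.univ : ℝ) - (t T : ℝ) := by
        exact_mod_cast congrArg (Int.cast : ℤ → ℝ) (hD.2 T)
      have hk : ((Tᶜ.card - d : ℕ) : ℝ) = (Tᶜ.card : ℝ) - (d : ℝ) := by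
        push_cast [Nat.cast_sub hdn]
        ring
      linarith
    have hsq : (-1 : ℝ) ^ d * (-1 : ℝ) ^ d = 1 := by
      rw [← mul_pow]; norm_num
    linear_combination
      ((-1 : ℝ) ^ d * tilde d f T * (x - y) ^ (T.card - d) * y ^ (Tᶜ.card - d)) * hexp
        - ((-1 : ℝ) ^ d * tilde d f T * lam ^ ((s Finset.univ : ℝ) - (s Tᶜ : ℝ))
            * lam ^ (((Tᶜ.card - d : ℕ)) : ℝ) * (x - y) ^ (T.card - d)
            * y ^ (Tᶜ.card - d)) * hsq
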